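/- For every integer k ≥ 3, with the weight grading wt(a)=0, wt(b)=1, wt(c)=0, wt(d)=1 on S and N_k := π(weightedHomogeneousSubmodule of weight k): N_k is the ℤ/2-span of the images π(a^m·b^k), π(c^n·b·d^(k−1)), and π(c^n·d^k) (m, n ≥ 0), and this family of images is ℤ/2-linearly independent in N (so it is a basis of N_k). -/

import Mathlib

open MvPolynomial

/-- `S = ℤ/2[a,b,c,d] ≅ H^*(BSO(3)²; ℤ/2)` with `a = w₂'`, `b = w₃'`, `c = w₂''`, `d = w₃''`. -/
noncomputable abbrev S : Type := MvPolynomial (Fin 4) (ZMod 2)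

noncomputable def a : S := X 0
noncomputable def b : S := X 1
noncomputable def c : S := X 2
noncomputable def d : S := X 3

/-- The ideal `J = (a·d + c·b, b·d² + b²·d)` of relations. -/
noncomputable def J : Ideal S := Ideal.span {a * d + c * b, b * d ^ 2 + b ^ 2 * d}

/-- `N = S ⧸ J`, the bottom line of the `E_∞`-term. -/
noncomputable abbrev N : Type := S ⧸ J

/-- The quotient map `π : S → N`. -/
noncomputable def π : S →+* N := Ideal.Quotient.mk J

/-- The weights `wt(a) = 0`, `wt(b) = 1`, `wt(c) = 0`, `wt(d) = 1`. -/
def wt : Fin 4 → ℕ := ![0, 1, 0, 1]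

/-- `N_k`: the image under `π` of the weighted-homogeneous polynomials of weight `k`. -/
noncomputable def Nwt (k : ℕ) : Submodule (ZMod 2) N :=
  Submodule.map (Ideal.Quotient.mkₐ (ZMod 2) J).toLinearMap
    (weightedHomogeneousSubmodule (ZMod 2) wt k)


/-! Put `x = b d^{k-1}`. For `k ≥ 3` the relations `ad = cb` and `b²d = bd²` give, in `N`,
`b^j d^m = x` for `j, m ≥ 1`, `a x = c x`, `a d^k = c x` and `c b^k = a x`, so every monomial of
weight `k` becomes one of `a^m b^k`, `c^n d^k`, `c^n x`. Independence is detected by evaluating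
along three components of `Spec N`, on which the family becomes triangular in monomials of `S`. -/

section Relations

variable {R : Type*} [CommRing R] {A B C D : R}

theorem pow_succ_mul_pow_succ_eq_mul_pow (hBD : B ^ 2 * D = B * D ^ 2) (j m : ℕ) :
    B ^ (j + 1) * D ^ (m + 1) = B * D ^ (j + m + 1) := by
  induction j generalizing m with
  | zero => simp
  | succ j ih =>
    linear_combination B ^ j * D ^ m * hBD + ih (m + 1)

theorem pow_mul_pow_mul_eq_pow_add_mul (hAD : A * D = C * B) (hBD : B ^ 2 * D = B * D ^ 2)
    (n i l : ℕ) :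
    A ^ i * C ^ l * (B * D ^ (n + 2)) = C ^ (i + l) * (B * D ^ (n + 2)) := by
  have hA : A * (B * D ^ (n + 2)) = C * (B * D ^ (n + 2)) := by
    linear_combination (B * D ^ (n + 1)) * hAD + (C * D ^ n) * hBD
  induction i with
  | zero => simp
  | succ i ih => linear_combination A * ih + C ^ (i + l) * hA

def weightFamily (A B C D : R) (k : ℕ) : ℕ ⊕ ℕ ⊕ ℕ → R :=
  Sum.elim (fun m ↦ A ^ m * B ^ k)
    (Sum.elim (fun n ↦ C ^ n * B * D ^ (k - 1)) (fun n ↦ C ^ n * D ^ k))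

theorem exists_weightFamily_eq (hAD : A * D = C * B) (hBD : B ^ 2 * D = B * D ^ 2) {k : ℕ}
    (hk : 3 ≤ k) (i j l m : ℕ) (hjm : j + m = k) :
    ∃ t, A ^ i * B ^ j * C ^ l * D ^ m = weightFamily A B C D k t := by
  obtain ⟨n, rfl⟩ := Nat.exists_eq_add_of_le' hk
  have key := pow_mul_pow_mul_eq_pow_add_mul hAD hBD n
  have hBD' (j m : ℕ) (h : j + m = n + 1) : B ^ (j + 1) * D ^ (m + 1) = B * D ^ (n + 2) := by
    rw [pow_succ_mul_pow_succ_eq_mul_pow hBD, h]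
  have hAD' : A * D ^ (n + 3) = C * (B * D ^ (n + 2)) := by
    linear_combination D ^ (n + 2) * hAD
  have hCB : C * B ^ (n + 3) = A * (B * D ^ (n + 2)) := by
    linear_combination -B ^ (n + 2) * hAD + A * hBD' (n + 1) 0 rfl
  simp only [weightFamily, Sum.exists, Sum.elim_inl, Sum.elim_inr,
    show n + 3 - 1 = n + 2 by omega]
  rcases j with _ | j <;> rcases m with _ | m
  · omega
  · obtain rfl : m = n + 2 := by omega
    rcases i with _ | i
    · exact Or.inr (Or.inr ⟨l, by ring⟩)
    · refine Or.inr (Or.inl ⟨i + (l + 1), ?_⟩)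
      linear_combination A ^ i * C ^ l * hAD' + key i (l + 1)
  · obtain rfl : j = n + 2 := by omega
    rcases l with _ | l
    · exact Or.inl ⟨i, by ring⟩
    · refine Or.inr (Or.inl ⟨i + 1 + l, ?_⟩)
      linear_combination A ^ i * C ^ l * hCB + key (i + 1) l
  · refine Or.inr (Or.inl ⟨i + l, ?_⟩)
    linear_combination A ^ i * C ^ l * hBD' j m (by omega) + key i l

variable (A B C D) in
theorem map_weightFamily {R' : Type*} [CommRing R'] (f : R →+* R') (k : ℕ) (t : ℕ ⊕ ℕ ⊕ ℕ) :
    f (weightFamily A B C D k t) = weightFamily (f A) (f B) (f C) (f D) k t := by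
  rcases t with m | n | n <;> simp [weightFamily]

end Relations

theorem MvPolynomial.linearIndependent_X_pow_mul_X_pow {σ R : Type*} [CommSemiring R] {i j : σ}
    (hij : i ≠ j) (k : ℕ) :
    LinearIndependent R (fun m : ℕ ↦ (X i ^ m * X j ^ k : MvPolynomial σ R)) := by
  have hmono : (fun m : ℕ ↦ (X i ^ m * X j ^ k : MvPolynomial σ R)) =
      basisMonomials σ R ∘ fun m ↦ Finsupp.single i m + Finsupp.single j k := by
    ext1 m
    simp [coe_basisMonomials, X_pow_eq_monomial, monomial_mul]
  rw [hmono]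
  refine (basisMonomials σ R).linearIndependent.comp _ fun m m' h ↦ ?_
  simpa [hij] using congr($h i)

theorem π_a_mul_π_d : π a * π d = π c * π b := by
  rw [← map_mul, ← map_mul, π, Ideal.Quotient.eq, CharTwo.sub_eq_add]
  exact Ideal.subset_span (by simp)

theorem π_b_sq_mul_π_d : π b ^ 2 * π d = π b * π d ^ 2 := by
  rw [← map_pow, ← map_pow, ← map_mul, ← map_mul, π, Ideal.Quotient.eq, CharTwo.sub_eq_add,
    add_comm]
  exact Ideal.subset_span (by simp)

theorem monomial_one_eq (e : Fin 4 →₀ ℕ) :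
    (monomial e 1 : S) = a ^ e 0 * b ^ e 1 * c ^ e 2 * d ^ e 3 := by
  simp [monomial_eq, Finsupp.prod_pow, Fin.prod_univ_four, a, b, c, d, mul_assoc]

theorem weight_wt (e : Fin 4 →₀ ℕ) : Finsupp.weight wt e = e 1 + e 3 := by
  simp [Finsupp.weight_apply, Finsupp.sum_fintype, Fin.sum_univ_four, wt]

theorem Nwt_eq_span_monomial (k : ℕ) :
    Nwt k = Submodule.span (ZMod 2)
      ((fun e ↦ π (monomial e 1)) '' {e | Finsupp.weight wt e = k}) := by
  rw [Nwt, weightedHomogeneousSubmodule_eq_finsupp_supported,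
    AddMonoidAlgebra.supported_eq_span_single, Submodule.map_span, Set.image_image]
  rfl

theorem π_mem_Nwt {p : S} {k : ℕ} (hp : IsWeightedHomogeneous wt p k) : π p ∈ Nwt k :=
  ⟨p, hp, rfl⟩

theorem isWeightedHomogeneous_weightFamily {k : ℕ} (hk : 1 ≤ k) (t : ℕ ⊕ ℕ ⊕ ℕ) :
    IsWeightedHomogeneous wt (weightFamily a b c d k t) k := by
  have hX (i : Fin 4) : IsWeightedHomogeneous wt (X i : S) (wt i) := isWeightedHomogeneous_X _ _ i
  rcases t with m | n | n
  · simpa [wt, weightFamily, a, b, c, d] using ((hX 0).pow m).mul ((hX 1).pow k)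
  · simpa [wt, weightFamily, a, b, c, d, Nat.add_sub_cancel' hk] using
      (((hX 2).pow n).mul (hX 1)).mul ((hX 3).pow (k - 1))
  · simpa [wt, weightFamily, a, b, c, d] using ((hX 2).pow n).mul ((hX 3).pow k)

theorem Nwt_eq_span_weightFamily {k : ℕ} (hk : 3 ≤ k) :
    Nwt k = Submodule.span (ZMod 2) (Set.range (weightFamily (π a) (π b) (π c) (π d) k)) := by
  refine le_antisymm ?_ ?_
  · rw [Nwt_eq_span_monomial, Submodule.span_le]
    rintro _ ⟨e, he, rfl⟩
    obtain ⟨t, ht⟩ := exists_weightFamily_eq π_a_mul_π_d π_b_sq_mul_π_d hk (e 0) (e 1) (e 2) (e 3)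
      ((weight_wt e).symm.trans he)
    simp only [SetLike.mem_coe, monomial_one_eq, map_mul, map_pow, ht]
    exact Submodule.subset_span ⟨t, rfl⟩
  · rw [Submodule.span_le]
    rintro _ ⟨t, rfl⟩
    rw [← map_weightFamily]
    exact π_mem_Nwt (isWeightedHomogeneous_weightFamily (by omega) t)

noncomputable def evalN {T : Type*} [CommRing T] [Algebra (ZMod 2) T] (x : Fin 4 → T)
    (h₁ : x 0 * x 3 + x 2 * x 1 = 0) (h₂ : x 1 * x 3 ^ 2 + x 1 ^ 2 * x 3 = 0) : N →ₐ[ZMod 2] T :=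
  Ideal.Quotient.liftₐ J (aeval x) fun _ hp ↦ by
    refine (Ideal.span_le (I := RingHom.ker (aeval x))).2 ?_ hp
    simp [Set.insert_subset_iff, a, b, c, d, h₁, h₂]

theorem evalN_π {T : Type*} [CommRing T] [Algebra (ZMod 2) T] (x : Fin 4 → T)
    (h₁ : x 0 * x 3 + x 2 * x 1 = 0) (h₂ : x 1 * x 3 ^ 2 + x 1 ^ 2 * x 3 = 0) (p : S) :
    evalN x h₁ h₂ (π p) = aeval x p :=
  rfl

/-- `Φ₁`, `Φ₂`, `Ψ` evaluate at the components `c = d = 0`, `a = b = 0`, `(a, b) = (c, d)` of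
`Spec N`, and `Ψ₁ = Ψ ∘ Φ₁`; the combination `G` puts the three subfamilies, as monomials of `S`,
into separate factors. -/
theorem linearIndependent_weightFamily {k : ℕ} (hk : 2 ≤ k) :
    LinearIndependent (ZMod 2) (weightFamily (π a) (π b) (π c) (π d) k) := by
  let Φ₁ := evalN ![a, b, 0, 0] (by simp) (by simp)
  let Φ₂ := evalN ![0, 0, c, d] (by simp) (by simp)
  let Ψ := evalN ![c, d, c, d] (by simp [CharTwo.add_self_eq_zero])
    (by simp [← pow_succ, ← pow_succ', CharTwo.add_self_eq_zero])
  let Ψ₁ := evalN ![c, d, 0, 0] (by simp) (by simp)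
  let G : N →ₗ[ZMod 2] S × S × S := Φ₁.toLinearMap.prod
    ((Ψ.toLinearMap - Ψ₁.toLinearMap - Φ₂.toLinearMap).prod Φ₂.toLinearMap)
  have hG : G ∘ weightFamily (π a) (π b) (π c) (π d) k =
      Sum.elim (LinearMap.inl (ZMod 2) _ _ ∘ fun m ↦ X 0 ^ m * X 1 ^ k)
        (LinearMap.inr (ZMod 2) _ _ ∘
          Sum.elim (LinearMap.inl (ZMod 2) _ _ ∘ fun n ↦ X 2 ^ n * X 3 ^ k)
            (LinearMap.inr (ZMod 2) _ _ ∘ fun n ↦ X 2 ^ n * X 3 ^ k)) := by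
    obtain ⟨k, rfl⟩ := Nat.exists_eq_add_of_le' hk
    ext1 t
    rcases t with m | n | n <;>
      simp [G, Φ₁, Φ₂, Ψ, Ψ₁, weightFamily, evalN_π, a, b, c, d, pow_succ]
    ring
  refine LinearIndependent.of_comp G ?_
  rw [hG]
  have hcd := linearIndependent_X_pow_mul_X_pow (R := ZMod 2) (i := (2 : Fin 4)) (j := 3)
    (by decide) k
  exact linearIndependent_inl_union_inr' (linearIndependent_X_pow_mul_X_pow (by decide) k)
    (linearIndependent_inl_union_inr' hcd hcd)

theorem stmt_11 (k : ℕ) (hk : 3 ≤ k) :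
    (Nwt k = Submodule.span (ZMod 2)
        (Set.range (Sum.elim (fun m : ℕ => π (a ^ m * b ^ k))
          (Sum.elim (fun n : ℕ => π (c ^ n * b * d ^ (k - 1)))
            (fun n : ℕ => π (c ^ n * d ^ k)))))) ∧
    LinearIndependent (ZMod 2) (Sum.elim (fun m : ℕ => π (a ^ m * b ^ k))
      (Sum.elim (fun n : ℕ => π (c ^ n * b * d ^ (k - 1)))
        (fun n : ℕ => π (c ^ n * d ^ k)))) := by
  have hfamily : Sum.elim (fun m : ℕ => π (a ^ m * b ^ k))
      (Sum.elim (fun n : ℕ => π (c ^ n * b * d ^ (k - 1))) (fun n : ℕ => π (c ^ n * d ^ k))) =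
      weightFamily (π a) (π b) (π c) (π d) k := by
    ext (m | n | n) <;> simp [weightFamily]
  rw [hfamily]
  exact ⟨Nwt_eq_span_weightFamily hk, linearIndependent_weightFamily (by omega)⟩
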